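/- arXiv:2306.16038 — 2 statements merged into one kernel-verified Lean document; each statement's English description precedes it below -/
import Mathlib

section
/- Let k be an integer with 0 ≤ k ≤ m-1, and define a = (γ^(2m+6k+2) + γ^(m+3k+1) + 1)/(3γ^(m+3k+1)), b = (γ^(2m) + γ^(m+3k+1) + γ^(6k+2))/(3γ^(m+3k+1)), c = (γ^(6k+2) + γ^(3k+1) + 1)/(3γ^(3k+1)) in F_q, and let g(x) = a·x^(2m+1) + b·x^(m+1) + c·x. Then for every integer i with 0 ≤ i ≤ m-1 one has g(γ^(3i+1)) = γ^(3(i+k)+2). -/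
/-!
Put `ω = γ^m`, a primitive cube root of unity, and `β = γ^(3k+1)`. Every `y = γ^(3i+1)` satisfies
`y^m = ω`, so `g y = P(ω) y` with `P(t) = a t² + b t + c`. By Lagrange interpolation over the
cube roots of unity, `P` is the quadratic taking the values `1, β, β⁻¹` at `1, ω, ω²`; in
particular `P(ω) = β`.
-/

lemma FiniteField.three_ne_zero_of_card_mod_three (F : Type*) [Field F] [Fintype F]
    (h : Fintype.card F % 3 = 1) : (3 : F) ≠ 0 := by
  intro h3
  have hcard := FiniteField.cast_card_eq_zero F
  rw [← Nat.div_add_mod (Fintype.card F) 3, h] at hcard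
  push_cast at hcard
  simp [h3] at hcard

lemma IsPrimitiveRoot.sq_add_self_add_one {R : Type*} [CommRing R] [IsDomain R] {ω : R}
    (hω : IsPrimitiveRoot ω 3) : ω ^ 2 + ω + 1 = 0 := by
  have := hω.geom_sum_eq_zero (by norm_num)
  simp only [Finset.sum_range_succ, Finset.sum_range_zero] at this
  linear_combination this

lemma pow_three_mul_add_one_pow {M : Type*} [Monoid M] {u : M} {m : ℕ} (hu : u ^ (3 * m) = 1)
    (i : ℕ) : (u ^ (3 * i + 1)) ^ m = u ^ m := by
  rw [← pow_mul, show (3 * i + 1) * m = 3 * m * i + m by ring, pow_add, pow_mul, hu, one_pow,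
    one_mul]

lemma cube_root_interpolation {F : Type*} [Field F] {ω β : F} (h3 : (3 : F) ≠ 0)
    (hω : ω ^ 2 + ω + 1 = 0) (hβ : β ≠ 0) :
    (ω ^ 2 * β ^ 2 + ω * β + 1) / (3 * (ω * β)) * ω ^ 2
      + (ω ^ 2 + ω * β + β ^ 2) / (3 * (ω * β)) * ω + (β ^ 2 + β + 1) / (3 * β) = β := by
  have hω0 : ω ≠ 0 := by rintro rfl; norm_num at hω
  field_simp
  linear_combination (β ^ 2 * ω + 1 + β - β ^ 2) * hω

theorem stmt2_general (q m : ℕ) (F : Type*) [Field F] [Fintype F]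
    (hq : Fintype.card F = q) (hq3 : q % 3 = 1)
    (hm : m = (q - 1) / 3)
    (γ : Fˣ) (hγ : ∀ x : Fˣ, x ∈ Subgroup.zpowers γ)
    (k : ℕ)
    (a b c : F)
    (ha : a = ((γ : F)^(2*m+6*k+2) + (γ : F)^(m+3*k+1) + 1) / (3 * (γ : F)^(m+3*k+1)))
    (hb : b = ((γ : F)^(2*m) + (γ : F)^(m+3*k+1) + (γ : F)^(6*k+2)) / (3 * (γ : F)^(m+3*k+1)))
    (hc : c = ((γ : F)^(6*k+2) + (γ : F)^(3*k+1) + 1) / (3 * (γ : F)^(3*k+1)))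
    (g : F → F)
    (hg : ∀ x : F, g x = a * x^(2*m+1) + b * x^(m+1) + c * x) :
    ∀ i : ℕ, i ≤ m - 1 → g ((γ : F)^(3*i+1)) = (γ : F)^(3*(i+k)+2) := by
  classical
  intro i _
  have hq2 : 2 ≤ q := hq ▸ Fintype.one_lt_card
  have horder : 3 * m = orderOf (γ : F) := by
    rw [orderOf_units, orderOf_eq_card_of_forall_mem_zpowers hγ, Nat.card_eq_fintype_card,
      Fintype.card_units, hq]
    omega
  have hroot : IsPrimitiveRoot ((γ : F) ^ m) 3 :=
    (IsPrimitiveRoot.orderOf (γ : F)).pow (by omega) (by rw [← horder, mul_comm])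
  have hy : ((γ : F) ^ (3 * i + 1)) ^ m = (γ : F) ^ m :=
    pow_three_mul_add_one_pow (horder ▸ pow_orderOf_eq_one _) i
  have hinterp := cube_root_interpolation (FiniteField.three_ne_zero_of_card_mod_three F (hq ▸ hq3))
    hroot.sq_add_self_add_one (pow_ne_zero (3 * k + 1) γ.ne_zero)
  rw [hg, ha, hb, hc, pow_succ _ (2 * m), pow_succ _ m, pow_mul', hy]
  linear_combination (γ : F) ^ (3 * i + 1) * hinterp

theorem stmt2 (q m : ℕ) (F : Type*) [Field F] [Fintype F]
    (hq : Fintype.card F = q) (hodd : Odd q) (hq3 : q % 3 = 1)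
    (hm : m = (q - 1) / 3)
    (γ : Fˣ) (hγ : ∀ x : Fˣ, x ∈ Subgroup.zpowers γ)
    (k : ℕ) (hk : k ≤ m - 1)
    (a b c : F)
    (ha : a = ((γ : F)^(2*m+6*k+2) + (γ : F)^(m+3*k+1) + 1) / (3 * (γ : F)^(m+3*k+1)))
    (hb : b = ((γ : F)^(2*m) + (γ : F)^(m+3*k+1) + (γ : F)^(6*k+2)) / (3 * (γ : F)^(m+3*k+1)))
    (hc : c = ((γ : F)^(6*k+2) + (γ : F)^(3*k+1) + 1) / (3 * (γ : F)^(3*k+1)))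
    (g : F → F)
    (hg : ∀ x : F, g x = a * x^(2*m+1) + b * x^(m+1) + c * x) :
    ∀ i : ℕ, i ≤ m - 1 → g ((γ : F)^(3*i+1)) = (γ : F)^(3*(i+k)+2) :=
  stmt2_general q m F hq hq3 hm γ hγ k a b c ha hb hc g hg
end

section
/- Let k be an integer with 0 ≤ k ≤ m-1, and define a = 2γ^(3k+1)/3, b = γ^(2m)/3, c = -γ^(2m+3k+1)/3, d = γ^m/3, e = -γ^(m+3k+1)/3, f = 1/3 in F_q. Then the map g : F_q → F_q given by g(x) = a·x^(3m-1) + b·x^(2m+1) + c·x^(2m-1) + d·x^(m+1) + e·x^(m-1) + f·x is a bijection of F_q, satisfies g(g(x)) = x for all x ∈ F_q, and the set {x ∈ F_q : g(x) = x} has exactly m+1 elements. -/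
/-!
Write ω = γ^m, a primitive cube root of unity, and t = γ^(3k+1), so that t^m = ω. Every x ≠ 0
satisfies x^(3m) = 1, and multiplying g(x) by x collapses it to

  x g(x) = (t (2 - s - s²) + (1 + s + s²) x²) / 3,   s = ω x^m,

where s is a cube root of unity. If s = 1, i.e. x^m = ω², then g(x) = x; otherwise 1 + s + s² = 0
and g(x) = t / x. Since (t/x)^m = ω / x^m, the map x ↦ t/x swaps the classes x^m = 1 and x^m = ω
and has no fixed point on them. So g is an involution whose fixed points are 0 and the m roots of
x^m = ω².
-/

theorem mul_eq_one_iff_eq_sq_of_pow_three_eq_one {M : Type*} [Monoid M] {ω u : M}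
    (hω : ω ^ 3 = 1) : ω * u = 1 ↔ u = ω ^ 2 := by
  refine ⟨fun h ↦ ?_, fun h ↦ by rw [h, ← pow_succ', hω]⟩
  calc u = ω ^ 3 * u := by rw [hω, one_mul]
    _ = ω ^ 2 * (ω * u) := by rw [pow_succ, mul_assoc]
    _ = ω ^ 2 := by rw [h, mul_one]

theorem IsPrimitiveRoot.ncard_setOf_pow_eq_pow {R : Type*} [CommRing R] [IsDomain R] {n : ℕ}
    {ζ α : R} (hζ : IsPrimitiveRoot ζ n) (hn : n ≠ 0) (hα : α ≠ 0) :
    {x : R | x ^ n = α ^ n}.ncard = n := by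
  classical
  have hroots : {x : R | x ^ n = α ^ n} = ↑(Polynomial.nthRoots n (α ^ n)).toFinset := by
    ext x
    simp [Polynomial.mem_nthRoots (Nat.pos_of_ne_zero hn)]
  rw [hroots, Set.ncard_coe_finset,
    Multiset.toFinset_card_of_nodup (hζ.nthRoots_nodup (pow_ne_zero n hα)),
    hζ.nthRoots_eq rfl, Multiset.card_map, Multiset.card_range]

section CubicInvolution

variable {F : Type*} [Field F]

noncomputable def cubicInvolution (m : ℕ) (ω t x : F) : F :=
  2 * t / 3 * x ^ (3 * m - 1) + ω ^ 2 / 3 * x ^ (2 * m + 1) + -(ω ^ 2 * t) / 3 * x ^ (2 * m - 1)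
    + ω / 3 * x ^ (m + 1) + -(ω * t) / 3 * x ^ (m - 1) + 1 / 3 * x

variable {m : ℕ} {ω t x : F}

theorem mul_cubicInvolution (hm : m ≠ 0) (hx : x ^ (3 * m) = 1) :
    x * cubicInvolution m ω t x =
      (t * (2 - ω * x ^ m - (ω * x ^ m) ^ 2) + (1 + ω * x ^ m + (ω * x ^ m) ^ 2) * x ^ 2) / 3 := by
  obtain ⟨n, rfl⟩ : ∃ n, m = n + 1 := ⟨m - 1, by omega⟩
  rw [cubicInvolution, show 3 * (n + 1) - 1 = 3 * n + 2 by omega,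
    show 2 * (n + 1) - 1 = 2 * n + 1 by omega, Nat.add_sub_cancel]
  linear_combination (2 * t / 3) * hx

theorem mul_pow_pow_three_eq_one (hω : ω ^ 3 = 1) (hx : x ^ (3 * m) = 1) :
    (ω * x ^ m) ^ 3 = 1 := by
  rw [mul_pow, ← pow_mul, mul_comm m, hω, hx, one_mul]

theorem cubicInvolution_zero (hm : 2 ≤ m) : cubicInvolution m ω t 0 = 0 := by
  simp [cubicInvolution, zero_pow, show m - 1 ≠ 0 by omega, show 2 * m - 1 ≠ 0 by omega,
    show 3 * m - 1 ≠ 0 by omega]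

theorem cubicInvolution_eq_self_of_mul_pow_eq_one (hm : m ≠ 0) (h3 : (3 : F) ≠ 0)
    (hx : x ^ (3 * m) = 1) (hs : ω * x ^ m = 1) : cubicInvolution m ω t x = x := by
  have hx0 : x ≠ 0 := by rintro rfl; simp [hm] at hx
  refine mul_left_cancel₀ hx0 ?_
  rw [mul_cubicInvolution hm hx, hs]
  field_simp
  ring

theorem mul_cubicInvolution_of_mul_pow_ne_one (hm : m ≠ 0) (h3 : (3 : F) ≠ 0) (hω : ω ^ 3 = 1)
    (hx : x ^ (3 * m) = 1) (hs : ω * x ^ m ≠ 1) : x * cubicInvolution m ω t x = t := by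
  have hs3 := mul_pow_pow_three_eq_one hω hx
  set s := ω * x ^ m
  have hsum : 1 + s + s ^ 2 = 0 := by
    have : (s - 1) * (1 + s + s ^ 2) = 0 := by linear_combination hs3
    exact (mul_eq_zero.mp this).resolve_left (sub_ne_zero.mpr hs)
  rw [mul_cubicInvolution hm hx, hsum]
  field_simp
  linear_combination (-t) * hsum

variable (hm : 2 ≤ m) (h3 : (3 : F) ≠ 0) (hω : ω ^ 3 = 1) (ht : t ^ m = ω)
  (hF : ∀ x : F, x ≠ 0 → x ^ (3 * m) = 1)
include hm h3 hω ht hF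

theorem cubicInvolution_involutive : Function.Involutive (cubicInvolution m ω t) := by
  intro x
  rcases eq_or_ne x 0 with rfl | hx0
  · rw [cubicInvolution_zero hm, cubicInvolution_zero hm]
  by_cases hs : ω * x ^ m = 1
  · rw [cubicInvolution_eq_self_of_mul_pow_eq_one (by omega) h3 (hF x hx0) hs,
      cubicInvolution_eq_self_of_mul_pow_eq_one (by omega) h3 (hF x hx0) hs]
  set y := cubicInvolution m ω t x
  have hxy : x * y = t := mul_cubicInvolution_of_mul_pow_ne_one (by omega) h3 hω (hF x hx0) hs
  have hy0 : y ≠ 0 := by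
    rintro hy
    rw [hy, mul_zero] at hxy
    rw [← hxy, zero_pow (by omega)] at ht
    simp [← ht] at hω
  have hys : ω * y ^ m ≠ 1 := by
    intro hys
    have : x ^ m * y ^ m = ω := by rw [← mul_pow, hxy, ht]
    exact hs (by linear_combination -(ω * x ^ m) * hys + ω ^ 2 * this + hω)
  have hyx : y * cubicInvolution m ω t y = y * x := by
    rw [mul_cubicInvolution_of_mul_pow_ne_one (by omega) h3 hω (hF y hy0) hys, ← hxy, mul_comm]
  exact mul_left_cancel₀ hy0 hyx

theorem cubicInvolution_eq_self_iff :
    cubicInvolution m ω t x = x ↔ x = 0 ∨ x ^ m = ω ^ 2 := by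
  rw [← mul_eq_one_iff_eq_sq_of_pow_three_eq_one hω]
  refine ⟨fun hfix ↦ ?_, ?_⟩
  · by_contra! h
    have hxx : x ^ 2 = t := by
      rw [sq, ← mul_cubicInvolution_of_mul_pow_ne_one (t := t) (by omega) h3 hω (hF x h.1) h.2,
        hfix]
    have hs3 := mul_pow_pow_three_eq_one hω (hF x h.1)
    have hs2 : (ω * x ^ m) ^ 2 = 1 := by
      rw [mul_pow, ← pow_mul, mul_comm m, pow_mul, hxx, ht, ← pow_succ, hω]
    exact h.2 (by linear_combination hs3 - (ω * x ^ m) * hs2)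
  · rintro (rfl | hs)
    · exact cubicInvolution_zero hm
    · have hx0 : x ≠ 0 := by rintro rfl; simp [show m ≠ 0 by omega] at hs
      exact cubicInvolution_eq_self_of_mul_pow_eq_one (by omega) h3 (hF x hx0) hs

theorem ncard_setOf_cubicInvolution_eq_self {ζ α : F} (hζ : IsPrimitiveRoot ζ m)
    (hα : α ^ m = ω ^ 2) : {x | cubicInvolution m ω t x = x}.ncard = m + 1 := by
  have hω0 : ω ≠ 0 := by rintro rfl; simp at hω
  have hα0 : α ≠ 0 := by
    rintro rfl
    exact pow_ne_zero 2 hω0 (by rw [← hα, zero_pow (by omega)])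
  have hfix : {x | cubicInvolution m ω t x = x} = insert 0 {x | x ^ m = α ^ m} := by
    ext x
    rw [hα]
    exact cubicInvolution_eq_self_iff hm h3 hω ht hF
  have hroots := hζ.ncard_setOf_pow_eq_pow (by omega) hα0
  have h0 : (0 : F) ∉ {x : F | x ^ m = α ^ m} := fun h ↦
    pow_ne_zero m hα0 (h.symm.trans (zero_pow (by omega)))
  rw [hfix, Set.ncard_insert_of_notMem h0 (Set.finite_of_ncard_pos (by omega)), hroots]

end CubicInvolution

theorem FiniteField.isPrimitiveRoot_of_forall_mem_zpowers {F : Type*} [Field F] [Fintype F]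
    {γ : Fˣ} (hγ : ∀ x : Fˣ, x ∈ Subgroup.zpowers γ) :
    IsPrimitiveRoot (γ : F) (Fintype.card F - 1) := by
  classical
  rw [IsPrimitiveRoot.coe_units_iff, ← Fintype.card_units, ← Nat.card_eq_fintype_card,
    ← orderOf_eq_card_of_forall_mem_zpowers hγ]
  exact IsPrimitiveRoot.orderOf γ

theorem stmt18_general (q m : ℕ) (F : Type*) [Field F] [Fintype F]
    (hq : Fintype.card F = q) (hodd : Odd q) (hq3 : q % 3 = 1)
    (hm : m = (q - 1) / 3)
    (γ : Fˣ) (hγ : ∀ x : Fˣ, x ∈ Subgroup.zpowers γ)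
    (k : ℕ)
    (a b c d e f : F)
    (ha : a = 2 * (γ : F)^(3*k+1) / 3)
    (hb : b = (γ : F)^(2*m) / 3)
    (hc : c = -(γ : F)^(2*m+3*k+1) / 3)
    (hd : d = (γ : F)^m / 3)
    (he : e = -(γ : F)^(m+3*k+1) / 3)
    (hf : f = 1 / 3)
    (g : F → F)
    (hg : ∀ x : F, g x = a * x^(3*m-1) + b * x^(2*m+1) + c * x^(2*m-1) + d * x^(m+1) + e * x^(m-1) + f * x) :
    Function.Bijective g ∧ (∀ x : F, g (g x) = x) ∧
      {x : F | g x = x}.ncard = m + 1 := by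
  have hq1 : 1 < q := hq ▸ Fintype.one_lt_card
  -- oddness rules out q = 4, where m = 1 and the term x ^ (m - 1) would give g 0 ≠ 0
  have hm2 : 2 ≤ m := by have := Nat.odd_iff.mp hodd; omega
  have hqm : q - 1 = 3 * m := by omega
  have hγ : IsPrimitiveRoot (γ : F) (3 * m) :=
    hqm ▸ hq ▸ FiniteField.isPrimitiveRoot_of_forall_mem_zpowers hγ
  obtain ⟨ω, hω_def⟩ : ∃ ω : F, ω = γ ^ m := ⟨_, rfl⟩
  obtain ⟨t, ht_def⟩ : ∃ t : F, t = γ ^ (3 * k + 1) := ⟨_, rfl⟩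
  have hω : IsPrimitiveRoot ω 3 := hω_def ▸ hγ.pow (by omega) (mul_comm 3 m)
  have h3 : (3 : F) ≠ 0 := by exact_mod_cast hω.neZero'.out
  have ht : t ^ m = ω := by
    rw [ht_def, hω_def, ← pow_mul, show (3 * k + 1) * m = 3 * m * k + m by ring, pow_add,
      pow_mul, hγ.pow_eq_one, one_pow, one_mul]
  have hF : ∀ x : F, x ≠ 0 → x ^ (3 * m) = 1 := fun x hx ↦
    hqm ▸ hq ▸ FiniteField.pow_card_sub_one_eq_one x hx
  obtain rfl : g = cubicInvolution m ω t := by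
    funext x
    rw [hg, ha, hb, hc, hd, he, hf, cubicInvolution, hω_def, ht_def]
    ring
  have hinv := cubicInvolution_involutive hm2 h3 hω.pow_eq_one ht hF
  exact ⟨hinv.bijective, hinv, ncard_setOf_cubicInvolution_eq_self hm2 h3 hω.pow_eq_one ht hF
    (hγ.pow (by omega) rfl) (by rw [hω_def, pow_right_comm])⟩

theorem stmt18 (q m : ℕ) (F : Type*) [Field F] [Fintype F]
    (hq : Fintype.card F = q) (hodd : Odd q) (hq3 : q % 3 = 1)
    (hm : m = (q - 1) / 3)
    (γ : Fˣ) (hγ : ∀ x : Fˣ, x ∈ Subgroup.zpowers γ)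
    (k : ℕ) (hk : k ≤ m - 1)
    (a b c d e f : F)
    (ha : a = 2 * (γ : F)^(3*k+1) / 3)
    (hb : b = (γ : F)^(2*m) / 3)
    (hc : c = -(γ : F)^(2*m+3*k+1) / 3)
    (hd : d = (γ : F)^m / 3)
    (he : e = -(γ : F)^(m+3*k+1) / 3)
    (hf : f = 1 / 3)
    (g : F → F)
    (hg : ∀ x : F, g x = a * x^(3*m-1) + b * x^(2*m+1) + c * x^(2*m-1) + d * x^(m+1) + e * x^(m-1) + f * x) :
    Function.Bijective g ∧ (∀ x : F, g (g x) = x) ∧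
      {x : F | g x = x}.ncard = m + 1 :=
  stmt18_general q m F hq hodd hq3 hm γ hγ k a b c d e f ha hb hc hd he hf g hg
end
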